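/- In the setting of the previous lifting theorem (adjunction (L ⊣ R, η, ε) : C ⇄ D restricting to subcategories, natural isomorphism α : Ψ∘L ⇒ L∘Φ, and β := RΨε ∘ (α^{-1})‾R), if moreover C' = Fix_η(C) and D' = Fix_ε(D), then the adjunction (Alg_{L,α} ⊣ Alg_{R,β}) : Alg(Φ)|Fix_η(C) ⇄ Alg(Ψ)|Fix_ε(D) is an adjoint equivalence (its unit and counit are natural isomorphisms). -/

import Mathlib

/-!
The unit and counit of `L ⊣ R` are already algebra morphisms
`(X, a) ⟶ Alg_{R,β} (Alg_{L,α} (X, a))` and `Alg_{L,α} (Alg_{R,β} (Y, b)) ⟶ (Y, b)`: for the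
unit this follows from the naturality of `η` and of `α⁻¹` together with the triangle identity
`Lη ≫ εL = 𝟙`, for the counit from the naturality of `ε` and the same triangle identity. The
triangle identities of the lifted adjunction are those of `L ⊣ R`, since algebra morphisms are
determined by their underlying maps. On `Fix_η(C)` and `Fix_ε(D)` the components of the unit and
counit are invertible, and an algebra morphism with invertible underlying map is invertible.
-/

open CategoryTheory

universe v₁ v₂ u₁ u₂

variable {C : Type u₁} [Category.{v₁} C] {D : Type u₂} [Category.{v₂} D]

/-- The restriction of the category of `Φ`-algebras to the full subcategory given by `P`. -/
abbrev AlgSub (Φ : C ⥤ C) (P : C → Prop) :=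
  ObjectProperty.FullSubcategory (fun A : Endofunctor.Algebra Φ => P A.a)

/-- The lifted functor `Alg_{L,α}` sending `(X, a)` to `(LX, La ∘ α_X)` and `f` to `Lf`. -/
def algMap (Φ : C ⥤ C) (Ψ : D ⥤ D) (P : C → Prop) (Q : D → Prop)
    (L : C ⥤ D) (hL : ∀ X : C, P X → Q (L.obj X))
    (α : ObjectProperty.ι P ⋙ L ⋙ Ψ ⟶ ObjectProperty.ι P ⋙ Φ ⋙ L) :
    AlgSub Φ P ⥤ AlgSub Ψ Q where
  obj A := ⟨⟨L.obj A.obj.a, α.app ⟨A.obj.a, A.property⟩ ≫ L.map A.obj.str⟩, hL _ A.property⟩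
  map {A B} f :=
    ObjectProperty.homMk
    { f := L.map (Endofunctor.Algebra.Hom.f f.hom)
      h := by
        have hn := α.naturality (X := ⟨A.obj.a, A.property⟩) (Y := ⟨B.obj.a, B.property⟩)
          (ObjectProperty.homMk (Endofunctor.Algebra.Hom.f f.hom))
        have hf := Endofunctor.Algebra.Hom.h f.hom
        dsimp at hn ⊢
        rw [← Category.assoc, hn, Category.assoc, ← L.map_comp, hf, L.map_comp, Category.assoc] }
  map_id A := by
    ext
    show L.map (𝟙 A.obj.a) = 𝟙 (L.obj A.obj.a)
    simp
  map_comp {A B E} f g := by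
    ext
    show L.map (Endofunctor.Algebra.Hom.f f.hom ≫ Endofunctor.Algebra.Hom.f g.hom) =
      L.map (Endofunctor.Algebra.Hom.f f.hom) ≫ L.map (Endofunctor.Algebra.Hom.f g.hom)
    simp

/-- `L` maps `Fix_η(C)` into `Fix_ε(D)`. -/
theorem isIso_counit_app_of_isIso_unit_app {L : C ⥤ D} {R : D ⥤ C} (adj : L ⊣ R)
    (X : C) (h : IsIso (adj.unit.app X)) : IsIso (adj.counit.app (L.obj X)) := by
  haveI := h
  haveI : IsIso (L.map (adj.unit.app X) ≫ adj.counit.app (L.obj X)) := by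
    rw [adj.left_triangle_components X]; exact IsIso.id _
  exact IsIso.of_isIso_comp_left (L.map (adj.unit.app X)) (adj.counit.app (L.obj X))

/-- `R` maps `Fix_ε(D)` into `Fix_η(C)`. -/
theorem isIso_unit_app_of_isIso_counit_app {L : C ⥤ D} {R : D ⥤ C} (adj : L ⊣ R)
    (Y : D) (h : IsIso (adj.counit.app Y)) : IsIso (adj.unit.app (R.obj Y)) := by
  haveI := h
  haveI : IsIso (adj.unit.app (R.obj Y) ≫ R.map (adj.counit.app Y)) := by
    rw [adj.right_triangle_components Y]; exact IsIso.id _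
  exact IsIso.of_isIso_comp_right (adj.unit.app (R.obj Y)) (R.map (adj.counit.app Y))

namespace CategoryTheory

theorem AlgSub.isIso_of_isIso_hom_f {Φ : C ⥤ C} {P : C → Prop} {A B : AlgSub Φ P}
    (f : A ⟶ B) [IsIso f.hom.f] : IsIso f :=
  have : IsIso ((ObjectProperty.ι _).map f) := Endofunctor.Algebra.iso_of_iso f.hom
  isIso_of_fully_faithful (ObjectProperty.ι _) f

namespace Adjunction

variable {Φ : C ⥤ C} {Ψ : D ⥤ D} {P : C → Prop} {Q : D → Prop}
  {L : C ⥤ D} {R : D ⥤ C} (adj : L ⊣ R)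
  (hL : ∀ X : C, P X → Q (L.obj X)) (hR : ∀ Y : D, Q Y → P (R.obj Y))
  (α : ObjectProperty.ι P ⋙ L ⋙ Ψ ⟶ ObjectProperty.ι P ⋙ Φ ⋙ L) [IsIso α]
  (β : ObjectProperty.ι Q ⋙ R ⋙ Φ ⟶ ObjectProperty.ι Q ⋙ Ψ ⋙ R)
  (hβ : ∀ Y : ObjectProperty.FullSubcategory Q,
    β.app Y = adj.unit.app (Φ.obj (R.obj Y.obj)) ≫
      R.map ((inv α).app ⟨R.obj Y.obj, hR _ Y.property⟩) ≫ R.map (Ψ.map (adj.counit.app Y.obj)))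

include hβ in
theorem unit_app_comp_algMap_str (A : AlgSub Φ P) :
    Φ.map (adj.unit.app A.obj.a) ≫
        ((algMap Φ Ψ P Q L hL α ⋙ algMap Ψ Φ Q P R hR β).obj A).obj.str =
      A.obj.str ≫ adj.unit.app A.obj.a := by
  obtain ⟨⟨X, a⟩, hX⟩ := A
  have hα := (inv α).naturality (X := ⟨X, hX⟩) (Y := ⟨R.obj (L.obj X), hR _ (hL _ hX)⟩)
    (ObjectProperty.homMk (adj.unit.app X))
  dsimp at hα
  dsimp [algMap]
  rw [hβ]
  dsimp
  calc
    _ = adj.unit.app (Φ.obj X) ≫ R.map (L.map (Φ.map (adj.unit.app X)) ≫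
          (inv α).app ⟨R.obj (L.obj X), hR _ (hL _ hX)⟩ ≫ Ψ.map (adj.counit.app (L.obj X)) ≫
          α.app ⟨X, hX⟩ ≫ L.map a) := by
      simp only [R.map_comp, Category.assoc, ← adj.unit_naturality_assoc]
    _ = adj.unit.app (Φ.obj X) ≫ R.map (L.map a) := by
      rw [reassoc_of% hα, ← Ψ.map_comp_assoc, left_triangle_components, Ψ.map_id,
        Category.id_comp, NatIso.isIso_inv_app, IsIso.inv_hom_id_assoc]
    _ = a ≫ adj.unit.app X := adj.unit_naturality a

include hβ in
theorem algMap_str_comp_counit_app (B : AlgSub Ψ Q) :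
    ((algMap Ψ Φ Q P R hR β ⋙ algMap Φ Ψ P Q L hL α).obj B).obj.str ≫
        adj.counit.app B.obj.a =
      Ψ.map (adj.counit.app B.obj.a) ≫ B.obj.str := by
  obtain ⟨⟨Y, b⟩, hY⟩ := B
  dsimp [algMap]
  rw [hβ]
  dsimp
  simp only [L.map_comp, Category.assoc, counit_naturality, counit_naturality_assoc,
    left_triangle_components_assoc, NatIso.isIso_inv_app, IsIso.hom_inv_id_assoc]

def liftAlgMap : algMap Φ Ψ P Q L hL α ⊣ algMap Ψ Φ Q P R hR β where
  unit.app A :=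
    ObjectProperty.homMk ⟨adj.unit.app A.obj.a, unit_app_comp_algMap_str adj hL hR α β hβ A⟩
  unit.naturality _ _ f :=
    ObjectProperty.hom_ext _ (Endofunctor.Algebra.Hom.ext (adj.unit.naturality f.hom.f))
  counit.app B :=
    ObjectProperty.homMk
      ⟨adj.counit.app B.obj.a, (algMap_str_comp_counit_app adj hL hR α β hβ B).symm⟩
  counit.naturality _ _ f :=
    ObjectProperty.hom_ext _ (Endofunctor.Algebra.Hom.ext (adj.counit.naturality f.hom.f))
  left_triangle_components A :=
    ObjectProperty.hom_ext _
      (Endofunctor.Algebra.Hom.ext (adj.left_triangle_components A.obj.a))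
  right_triangle_components B :=
    ObjectProperty.hom_ext _
      (Endofunctor.Algebra.Hom.ext (adj.right_triangle_components B.obj.a))

theorem isIso_liftAlgMap_unit (h : ∀ X, P X → IsIso (adj.unit.app X)) :
    IsIso (adj.liftAlgMap hL hR α β hβ).unit :=
  have (A : AlgSub Φ P) : IsIso ((adj.liftAlgMap hL hR α β hβ).unit.app A) :=
    have : IsIso ((adj.liftAlgMap hL hR α β hβ).unit.app A).hom.f := h _ A.property
    AlgSub.isIso_of_isIso_hom_f _
  NatIso.isIso_of_isIso_app _

theorem isIso_liftAlgMap_counit (h : ∀ Y, Q Y → IsIso (adj.counit.app Y)) :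
    IsIso (adj.liftAlgMap hL hR α β hβ).counit :=
  have (B : AlgSub Ψ Q) : IsIso ((adj.liftAlgMap hL hR α β hβ).counit.app B) :=
    have : IsIso ((adj.liftAlgMap hL hR α β hβ).counit.app B).hom.f := h _ B.property
    AlgSub.isIso_of_isIso_hom_f _
  NatIso.isIso_of_isIso_app _

end Adjunction

end CategoryTheory

theorem stmt3 (Φ : C ⥤ C) (Ψ : D ⥤ D)
    (L : C ⥤ D) (R : D ⥤ C) (adj : L ⊣ R)
    (α : ObjectProperty.ι (fun X : C => IsIso (adj.unit.app X)) ⋙ L ⋙ Ψ ⟶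
         ObjectProperty.ι (fun X : C => IsIso (adj.unit.app X)) ⋙ Φ ⋙ L)
    [IsIso α]
    (β : ObjectProperty.ι (fun Y : D => IsIso (adj.counit.app Y)) ⋙ R ⋙ Φ ⟶
         ObjectProperty.ι (fun Y : D => IsIso (adj.counit.app Y)) ⋙ Ψ ⋙ R)
    (hβ : ∀ Y : ObjectProperty.FullSubcategory (fun Y : D => IsIso (adj.counit.app Y)),
      β.app Y = adj.unit.app (Φ.obj (R.obj Y.obj)) ≫
        R.map ((inv α).app
          ⟨R.obj Y.obj, isIso_unit_app_of_isIso_counit_app adj Y.obj Y.property⟩) ≫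
        R.map (Ψ.map (adj.counit.app Y.obj))) :
    ∃ adj' : algMap Φ Ψ _ _ L (fun X => isIso_counit_app_of_isIso_unit_app adj X) α ⊣
             algMap Ψ Φ _ _ R (fun Y => isIso_unit_app_of_isIso_counit_app adj Y) β,
      (∀ A : AlgSub Φ (fun X : C => IsIso (adj.unit.app X)),
        Endofunctor.Algebra.Hom.f (adj'.unit.app A).hom = adj.unit.app A.obj.a) ∧
      (∀ B : AlgSub Ψ (fun Y : D => IsIso (adj.counit.app Y)),
        Endofunctor.Algebra.Hom.f (adj'.counit.app B).hom = adj.counit.app B.obj.a) ∧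
      IsIso adj'.unit ∧ IsIso adj'.counit := by
  have hL := isIso_counit_app_of_isIso_unit_app adj
  have hR := isIso_unit_app_of_isIso_counit_app adj
  exact ⟨adj.liftAlgMap hL hR α β hβ, fun _ => rfl, fun _ => rfl,
    adj.isIso_liftAlgMap_unit hL hR α β hβ fun _ => id,
    adj.isIso_liftAlgMap_counit hL hR α β hβ fun _ => id⟩
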